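/- For each cyclotomic class W_j (0 ≤ j ≤ d-1) and each t ∈ P, the sum of β^{it} over i ∈ W_j equals -((n₁-1)/d) mod p. -/

import Mathlib

/-!
Put `δ = β ^ (k n₁)`, a primitive `n₂`-th root of unity, so that `β ^ (i t) = δ ^ (i mod n₂)`.
For `i = g ^ s u ^ j` we have `i ≡ g ^ s (mod n₂)` because `u ≡ 1 (mod n₂)`. By the Chinese
remainder theorem `g` has order `lcm (n₁ - 1) (n₂ - 1) = e` modulo `n`, so `W_j` is enumerated
without repetition by `s < e`; as `g` is a primitive root modulo `n₂`, the residues `g ^ s mod n₂`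
then run `(n₁ - 1) / d` times through the nonzero classes, over which the values of the
additive character `a ↦ δ ^ a` sum to `-1`.
-/

/-- The Whiteman generalized cyclotomic class `W_i = {g^s u^i mod n : 0 ≤ s ≤ e-1}`. -/
def whitemanClass (n e : ℕ) (g u : ZMod n) (i : ℕ) : Finset (ZMod n) :=
  (Finset.range e).image (fun s => g ^ s * u ^ i)

open Finset

theorem orderOf_natCast_zmod_mul {m n : ℕ} (hmn : m.Coprime n) (x : ℕ) :
    orderOf (x : ZMod (m * n)) = (orderOf (x : ZMod m)).lcm (orderOf (x : ZMod n)) := by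
  rw [← (ZMod.chineseRemainder hmn).toMulEquiv.orderOf_eq, ← Prod.orderOf_mk]
  congr 1
  exact map_natCast (ZMod.chineseRemainder hmn) x

theorem isUnit_natCast_zmod_mul {m n x : ℕ} (hm : IsUnit (x : ZMod m))
    (hn : IsUnit (x : ZMod n)) : IsUnit (x : ZMod (m * n)) := by
  rw [ZMod.isUnit_iff_coprime] at *
  exact hm.mul_right hn

theorem sum_whitemanClass_eq_sum_range {M : Type*} [AddCommMonoid M] {n e : ℕ} {g u : ZMod n}
    (hg : orderOf g = e) (hu : IsUnit u) (j : ℕ) (f : ZMod n → M) :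
    ∑ i ∈ whitemanClass n e g u j, f i = ∑ s ∈ range e, f (g ^ s * u ^ j) := by
  subst hg
  exact sum_image fun x hx y hy hxy => pow_injOn_Iio_orderOf (by simpa using hx)
    (by simpa using hy) ((hu.pow j).mul_left_inj.mp hxy)

theorem sum_range_mul_pow_eq_nsmul {G M : Type*} [Monoid G] [AddCommMonoid M] {x : G} {c : ℕ}
    (hx : x ^ c = 1) (q : ℕ) (f : G → M) :
    ∑ s ∈ range (q * c), f (x ^ s) = q • ∑ s ∈ range c, f (x ^ s) := by
  rw [← Fin.sum_univ_eq_sum_range (fun s => f (x ^ s)), ← finProdFinEquiv.sum_comp,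
    Fintype.sum_prod_type, ← Fin.sum_univ_eq_sum_range (fun s => f (x ^ s))]
  simp [finProdFinEquiv, pow_add, pow_mul, hx]

theorem sum_range_orderOf_pow_eq_sum_erase_zero {G₀ M : Type*} [GroupWithZero G₀] [Fintype G₀]
    [DecidableEq G₀] [AddCommMonoid M] {x : G₀} (hx : orderOf x = Fintype.card G₀ - 1)
    (f : G₀ → M) : ∑ s ∈ range (orderOf x), f (x ^ s) = ∑ a ∈ univ.erase 0, f a := by
  have hx0 : x ≠ 0 := by
    have := Fintype.one_lt_card (α := G₀)
    exact (orderOf_pos_iff.mp (by omega)).isUnit.ne_zero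
  have hinj : Set.InjOn (x ^ ·) (range (orderOf x)) := by
    simpa [Set.InjOn] using pow_injOn_Iio_orderOf (x := x)
  rw [← sum_image hinj]
  congr 1
  refine eq_of_subset_of_card_le (fun a ha => ?_) ?_
  · obtain ⟨s, -, rfl⟩ := mem_image.mp ha
    exact mem_erase.mpr ⟨pow_ne_zero s hx0, mem_univ _⟩
  · rw [card_image_of_injOn hinj, card_erase_of_mem (mem_univ _), card_univ, card_range, hx]

theorem AddChar.sum_erase_zero_eq_neg_one {G R : Type*} [AddGroup G] [Fintype G] [DecidableEq G]
    [CommRing R] [IsDomain R] {ψ : AddChar G R} (hψ : ψ ≠ 1) :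
    ∑ a ∈ univ.erase 0, ψ a = -1 := by
  rw [sum_erase_eq_sub (mem_univ 0), AddChar.sum_eq_zero_of_ne_one hψ, map_zero_eq_one, zero_sub]

theorem pow_val_eq_zmodChar_castHom {C : Type*} [CommMonoid C] {m N : ℕ} [NeZero m] [NeZero N]
    {ζ : C} (hζ : ζ ^ m = 1) (h : m ∣ N) (i : ZMod N) :
    ζ ^ i.val = AddChar.zmodChar m hζ (ZMod.castHom h (ZMod m) i) := by
  rw [ZMod.castHom_apply, ← ZMod.natCast_val, AddChar.zmodChar_apply']

theorem IsPrimitiveRoot.pow_mul_of_coprime {M : Type*} [CommMonoid M] {ζ : M} {a b k : ℕ}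
    (h : IsPrimitiveRoot ζ (a * b)) (hab : 0 < a * b) (hk : k.Coprime b) :
    IsPrimitiveRoot (ζ ^ (a * k)) b := by
  rw [pow_mul]
  exact (h.pow hab rfl).pow_of_coprime k hk

theorem sum_whitemanClass_P_general {K : Type*} [Field K]
    (n₁ n₂ n d e : ℕ)
    (hp₁ : n₁.Prime) (hp₂ : n₂.Prime) (hne : n₁ ≠ n₂)
    (hn : n = n₁ * n₂) (hd : d = Nat.gcd (n₁ - 1) (n₂ - 1))
    (he : e = (n₁ - 1) * (n₂ - 1) / d)
    (g u : ℕ)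
    (hg₁ : orderOf (g : ZMod n₁) = n₁ - 1) (hg₂ : orderOf (g : ZMod n₂) = n₂ - 1)
    (hu₁ : u ≡ g [MOD n₁]) (hu₂ : u ≡ 1 [MOD n₂])
    (β : K) (hβ : IsPrimitiveRoot β n)
    (j : ℕ) (t k : ℕ) (ht : t = k * n₁) (hk₁ : 1 ≤ k) (hk₂ : k ≤ n₂ - 1) :
    ∑ i ∈ whitemanClass n e (g : ZMod n) (u : ZMod n) j, β ^ (i.val * t) =
      -(((n₁ - 1) / d : ℕ) : K) := by
  subst hn ht
  have : Fact n₂.Prime := ⟨hp₂⟩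
  have hn : 0 < n₁ * n₂ := Nat.mul_pos hp₁.pos hp₂.pos
  have : NeZero (n₁ * n₂) := ⟨hn.ne'⟩
  have hcop : n₁.Coprime n₂ := (Nat.coprime_primes hp₁ hp₂).mpr hne
  have hg : orderOf (g : ZMod (n₁ * n₂)) = e := by
    rw [orderOf_natCast_zmod_mul hcop, hg₁, hg₂, he, hd]
    rfl
  have hu₂' : (u : ZMod n₂) = 1 := by simpa using (ZMod.natCast_eq_natCast_iff u 1 n₂).mpr hu₂
  have hu : IsUnit (u : ZMod (n₁ * n₂)) := by
    refine isUnit_natCast_zmod_mul ?_ (hu₂' ▸ isUnit_one)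
    rw [(ZMod.natCast_eq_natCast_iff u g n₁).mpr hu₁]
    exact (orderOf_pos_iff.mp (hg₁ ▸ Nat.sub_pos_of_lt hp₁.one_lt)).isUnit
  have hδ : IsPrimitiveRoot (β ^ (n₁ * k)) n₂ :=
    hβ.pow_mul_of_coprime hn (Nat.coprime_of_lt_prime (by omega) (by omega) hp₂).symm
  set ψ := AddChar.zmodChar n₂ hδ.pow_eq_one
  have hψ : ψ ≠ 1 := by simpa using AddChar.zmodChar_primitive_of_primitive_root n₂ hδ one_ne_zero
  have hterm : ∀ s, β ^ (((g : ZMod (n₁ * n₂)) ^ s * (u : ZMod (n₁ * n₂)) ^ j).val * (k * n₁)) =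
      ψ ((g : ZMod n₂) ^ s) := by
    intro s
    rw [mul_comm, mul_comm k, pow_mul,
      pow_val_eq_zmodChar_castHom hδ.pow_eq_one (dvd_mul_left n₂ n₁)]
    simp [ψ, hu₂']
  have he' : e = (n₁ - 1) / d * orderOf (g : ZMod n₂) := by
    rw [he, hg₂, Nat.div_mul_right_comm (hd ▸ Nat.gcd_dvd_left _ _)]
  rw [sum_whitemanClass_eq_sum_range hg hu, sum_congr rfl fun s _ => hterm s, he',
    sum_range_mul_pow_eq_nsmul (pow_orderOf_eq_one _),
    sum_range_orderOf_pow_eq_sum_erase_zero (by rw [hg₂, ZMod.card]),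
    AddChar.sum_erase_zero_eq_neg_one hψ, nsmul_eq_mul, mul_neg_one]

/-- For each cyclotomic class `W_j` and each `t ∈ P = {kn₁ : 1 ≤ k ≤ n₂-1}`,
`∑_{i ∈ W_j} β^{it} = -((n₁-1)/d)` in a field of characteristic `p` with `p ∤ n`. -/
theorem sum_whitemanClass_P {K : Type*} [Field K] (p : ℕ) [CharP K p]
    (n₁ n₂ n d e : ℕ)
    (hp₁ : n₁.Prime) (hp₂ : n₂.Prime) (ho₁ : Odd n₁) (ho₂ : Odd n₂) (hne : n₁ ≠ n₂)
    (hn : n = n₁ * n₂) (hd : d = Nat.gcd (n₁ - 1) (n₂ - 1))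
    (he : e = (n₁ - 1) * (n₂ - 1) / d)
    (g u : ℕ)
    (hg₁ : orderOf (g : ZMod n₁) = n₁ - 1) (hg₂ : orderOf (g : ZMod n₂) = n₂ - 1)
    (hu₁ : u ≡ g [MOD n₁]) (hu₂ : u ≡ 1 [MOD n₂])
    (β : K) (hβ : IsPrimitiveRoot β n) (hpn : ¬ p ∣ n)
    (j : ℕ) (hj : j < d) (t k : ℕ) (ht : t = k * n₁) (hk₁ : 1 ≤ k) (hk₂ : k ≤ n₂ - 1) :
    ∑ i ∈ whitemanClass n e (g : ZMod n) (u : ZMod n) j, β ^ (i.val * t) =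
      -(((n₁ - 1) / d : ℕ) : K) :=
  sum_whitemanClass_P_general n₁ n₂ n d e hp₁ hp₂ hne hn hd he g u hg₁ hg₂ hu₁ hu₂ β hβ j t k ht hk₁
    hk₂
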